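/- arXiv:0807.3712 — 2 statements merged into one kernel-verified Lean document; each statement's English description precedes it below -/
import Mathlib

section
/- For every integer n ≥ 1 and every z ∈ ℂ \ {0}, κ_{2n}² Φ*_{2n}(z) = (1/2) z^n [a_n^{−1}(1 + β_n i) σ_n(z) − i b_n^{−1} π_n(z)], where Φ*_{2n} is the reversed polynomial of Φ_{2n}. -/
open MeasureTheory Complex Filter

noncomputable section

/-- The Laurent "cosine" `(z^n + z^(-n))/2`, equal to `cos (n θ)` for `z = e^(iθ)`. -/
def cosL (n : ℕ) (z : ℂ) : ℂ := (z ^ n + (z ^ n)⁻¹) / 2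

/-- The Laurent "sine" `(z^n - z^(-n))/(2 i)`, equal to `sin (n θ)` for `z = e^(iθ)`. -/
def sinL (n : ℕ) (z : ℂ) : ℂ := (z ^ n - (z ^ n)⁻¹) / (2 * I)

/-- The real pairing `⟨f, g⟩_R = ∫ f g dμ`. -/
def innR (μ : Measure ℂ) (f g : ℂ → ℂ) : ℂ := ∫ τ, f τ * g τ ∂μ

/-- A nontrivial probability measure `μ` on the unit circle (infinite support), together
with the data produced by the Gram–Schmidt procedure applied (w.r.t. `⟨·,·⟩_R`) to the
ordered trigonometric system `{1, sin θ, cos θ, …, sin nθ, cos nθ, …}` (written as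
Laurent polynomials via `sin nθ = (z^n - z^(-n))/(2i)`, `cos nθ = (z^n + z^(-n))/2`):
`b n * pii n` is `sin nθ` minus its orthogonal projection onto the span of the previous
elements; `a n * sig n` is `cos nθ` minus its orthogonal projection onto the span of the
previous elements (including `sin nθ`); `a n, b n > 0` are the corresponding norms, so
that `sig n`, `pii n` are the orthonormal trigonometric polynomials; and
`β n = ⟨cos nθ, (b n)⁻¹ pii n⟩_R`.  Conventions: `sig 0 = 1`, `pii 0 = 0`, `β 0 = 0`,
`a 0 = b 0 = 1`. -/
structure OTP where
  μ : Measure ℂ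
  prob : IsProbabilityMeasure μ
  circ : μ {z : ℂ | ‖z‖ = 1}ᶜ = 0
  nontriv : ∀ s : Finset ℂ, μ ((s : Set ℂ))ᶜ ≠ 0
  a : ℕ → ℝ
  b : ℕ → ℝ
  β : ℕ → ℝ
  sig : ℕ → ℂ → ℂ
  pii : ℕ → ℂ → ℂ
  ha : ∀ n, 0 < a n
  hb : ∀ n, 0 < b n
  a_zero : a 0 = 1
  b_zero : b 0 = 1
  β_zero : β 0 = 0
  sig_zero : ∀ z, sig 0 z = 1
  pii_zero : ∀ z, pii 0 z = 0
  pii_span : ∀ n, 1 ≤ n → ∃ c d : ℕ → ℝ, ∀ z : ℂ, z ≠ 0 →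
    (b n : ℂ) * pii n z =
      sinL n z + ∑ k ∈ Finset.range n, ((c k : ℂ) * cosL k z + (d k : ℂ) * sinL k z)
  pii_orth : ∀ n, 1 ≤ n → ∀ k < n,
    innR μ (fun z => (b n : ℂ) * pii n z) (cosL k) = 0 ∧
    innR μ (fun z => (b n : ℂ) * pii n z) (sinL k) = 0
  b_norm : ∀ n, 1 ≤ n →
    ((b n : ℂ)) ^ 2 = innR μ (fun z => (b n : ℂ) * pii n z) (fun z => (b n : ℂ) * pii n z)
  sig_span : ∀ n, 1 ≤ n → ∃ c d : ℕ → ℝ, ∃ e : ℝ, ∀ z : ℂ, z ≠ 0 →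
    (a n : ℂ) * sig n z =
      cosL n z + (e : ℂ) * sinL n z +
        ∑ k ∈ Finset.range n, ((c k : ℂ) * cosL k z + (d k : ℂ) * sinL k z)
  sig_orth : ∀ n, 1 ≤ n →
    (∀ k < n,
      innR μ (fun z => (a n : ℂ) * sig n z) (cosL k) = 0 ∧
      innR μ (fun z => (a n : ℂ) * sig n z) (sinL k) = 0) ∧
    innR μ (fun z => (a n : ℂ) * sig n z) (sinL n) = 0
  a_norm : ∀ n, 1 ≤ n →
    ((a n : ℂ)) ^ 2 = innR μ (fun z => (a n : ℂ) * sig n z) (fun z => (a n : ℂ) * sig n z)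
  β_def : ∀ n, 1 ≤ n →
    (β n : ℂ) = innR μ (cosL n) (fun z => ((b n : ℂ))⁻¹ * pii n z)

/-- The data of `OTP` together with the monic orthogonal polynomials on the unit circle:
`Φ n` is the (unique) monic polynomial of degree `n` with
`∫ conj (τ^j) * Φ n τ dμ = 0` for all `j < n`, and `κ n = ‖Φ n‖⁻¹ > 0` where
`‖Φ n‖² = ∫ |Φ n τ|² dμ`. -/
structure OPUC extends OTP where
  Φ : ℕ → Polynomial ℂ
  Φ_monic : ∀ n, (Φ n).Monic
  Φ_deg : ∀ n, (Φ n).natDegree = n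
  Φ_orth : ∀ n, ∀ j < n, ∫ τ, (starRingEnd ℂ) (τ ^ j) * (Φ n).eval τ ∂μ = 0
  κ : ℕ → ℝ
  κ_pos : ∀ n, 0 < κ n
  κ_def : ∀ n, (κ n) ^ 2 * ∫ τ, ‖(Φ n).eval τ‖ ^ 2 ∂μ = 1

/-- The reversed polynomial `Q*(z) = z^n * conj (Q (1 / conj z))` of a polynomial `Q`
of degree `n`. -/
def revP (n : ℕ) (Q : Polynomial ℂ) (z : ℂ) : ℂ :=
  z ^ n * (starRingEnd ℂ) (Q.eval ((starRingEnd ℂ) z)⁻¹)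

/-!
The right-hand side is `z^n F(z)` with `F` a trigonometric polynomial of degree `n`, so it is a
polynomial `p` of degree at most `2n`. The Gram–Schmidt relations give the real pairings of
`σ_n` and `π_n` with `cos kθ` and `sin kθ` for `k ≤ n`, and from these `⟨z^j, p⟩ = δ_{j0}` for
`0 ≤ j ≤ 2n`. These moments characterise `κ_{2n}² Φ*_{2n}`: on the circle
`Φ*_{2n} = z^{2n} conj Φ_{2n}`, which is orthogonal to `z, …, z^{2n}` and has
`⟨1, Φ*_{2n}⟩ = ‖Φ_{2n}‖² = κ_{2n}⁻²`; and a polynomial of degree at most `2n` orthogonal to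
`1, …, z^{2n}` has norm zero, hence vanishes because `μ` has infinite support.
-/

open Polynomial Metric

lemma Polynomial.eval_map_conj_conj (Φ : ℂ[X]) (y : ℂ) :
    (Φ.map (starRingEnd ℂ)).eval ((starRingEnd ℂ) y) = (starRingEnd ℂ) (Φ.eval y) := by
  rw [eval_map, eval, hom_eval₂, RingHom.comp_id]

lemma Polynomial.eval_reflect {z : ℂ} (hz : z ≠ 0) {N : ℕ} {f : ℂ[X]} (hf : f.natDegree ≤ N) :
    (reflect N f).eval z = z ^ N * f.eval z⁻¹ := by
  have := invertibleOfNonzero (inv_ne_zero hz)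
  have h := eval₂_reflect_mul_pow (RingHom.id ℂ) z⁻¹ N f hf
  simp only [invOf_eq_inv, inv_inv, eval₂_id] at h
  rw [← h, inv_pow, mul_left_comm, mul_inv_cancel₀ (pow_ne_zero N hz), mul_one]

lemma eval_reflect_map_conj {z : ℂ} (hz : z ≠ 0) {N : ℕ} {Φ : ℂ[X]} (hΦ : Φ.natDegree ≤ N) :
    (reflect N (Φ.map (starRingEnd ℂ))).eval z = revP N Φ z := by
  rw [eval_reflect hz (natDegree_map_le.trans hΦ), revP, ← map_inv₀, ← eval_map_conj_conj,
    conj_conj]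

lemma cosL_add_I_mul_sinL (k : ℕ) {z : ℂ} (hz : z ≠ 0) : cosL k z + I * sinL k z = z ^ k := by
  simp only [cosL, sinL]
  field_simp
  ring

lemma cosL_add_neg_I_mul_sinL (k : ℕ) {z : ℂ} (hz : z ≠ 0) :
    cosL k z + -I * sinL k z = (z ^ k)⁻¹ := by
  simp only [cosL, sinL]
  field_simp
  ring

/-- `f` agrees on `ℂ ∖ {0}` with a Laurent polynomial `∑_{|k| ≤ n} c_k z^k`, encoded by asking
that `z^n f(z)` be a polynomial of degree at most `2n`. -/
def IsTrigPoly (n : ℕ) (f : ℂ → ℂ) : Prop :=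
  ∃ p : ℂ[X], p.natDegree ≤ 2 * n ∧ ∀ z ≠ 0, z ^ n * f z = p.eval z

namespace IsTrigPoly

variable {n : ℕ} {f g : ℂ → ℂ}

lemma congr (hf : IsTrigPoly n f) (hfg : ∀ z ≠ 0, f z = g z) : IsTrigPoly n g := by
  obtain ⟨p, hp, hfp⟩ := hf
  exact ⟨p, hp, fun z hz => by rw [← hfg z hz, hfp z hz]⟩

lemma zero : IsTrigPoly n fun _ => 0 :=
  ⟨0, by simp, fun z _ => by simp⟩

lemma add (hf : IsTrigPoly n f) (hg : IsTrigPoly n g) : IsTrigPoly n (fun z => f z + g z) := by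
  obtain ⟨p, hp, hfp⟩ := hf
  obtain ⟨q, hq, hgq⟩ := hg
  exact ⟨p + q, (natDegree_add_le _ _).trans (max_le hp hq),
    fun z hz => by rw [eval_add, ← hfp z hz, ← hgq z hz]; ring⟩

lemma sub (hf : IsTrigPoly n f) (hg : IsTrigPoly n g) : IsTrigPoly n (fun z => f z - g z) := by
  obtain ⟨p, hp, hfp⟩ := hf
  obtain ⟨q, hq, hgq⟩ := hg
  exact ⟨p - q, (natDegree_sub_le _ _).trans (max_le hp hq),
    fun z hz => by rw [eval_sub, ← hfp z hz, ← hgq z hz]; ring⟩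

lemma const_mul (c : ℂ) (hf : IsTrigPoly n f) : IsTrigPoly n (fun z => c * f z) := by
  obtain ⟨p, hp, hfp⟩ := hf
  exact ⟨C c * p, (natDegree_C_mul_le _ _).trans hp,
    fun z hz => by rw [eval_mul, eval_C, ← hfp z hz]; ring⟩

lemma sum {ι : Type*} (s : Finset ι) {f : ι → ℂ → ℂ} (hf : ∀ i ∈ s, IsTrigPoly n (f i)) :
    IsTrigPoly n (fun z => ∑ i ∈ s, f i z) := by
  classical
  induction s using Finset.induction_on with
  | empty => simpa using zero
  | insert i s hi ih =>
    simp_rw [Finset.sum_insert hi]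
    exact (hf i (s.mem_insert_self i)).add (ih fun j hj => hf j (Finset.mem_insert_of_mem hj))

lemma mono {m : ℕ} (hf : IsTrigPoly n f) (hnm : n ≤ m) : IsTrigPoly m f := by
  obtain ⟨p, hp, hfp⟩ := hf
  refine ⟨X ^ (m - n) * p, (natDegree_mul_le).trans ?_, fun z hz => ?_⟩
  · rw [natDegree_X_pow]; omega
  · rw [eval_mul, eval_X_pow, ← hfp z hz, ← mul_assoc, ← pow_add, Nat.sub_add_cancel hnm]

lemma cosL (n : ℕ) : IsTrigPoly n (cosL n) := by
  refine ⟨C (1 / 2) * (X ^ (2 * n) + 1), by compute_degree!, fun z hz => ?_⟩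
  simp only [_root_.cosL, eval_mul, eval_C, eval_add, eval_X_pow, eval_one]
  field_simp
  ring

lemma sinL (n : ℕ) : IsTrigPoly n (sinL n) := by
  refine ⟨C (1 / (2 * I)) * (X ^ (2 * n) - 1), by compute_degree!, fun z hz => ?_⟩
  simp only [_root_.sinL, eval_mul, eval_C, eval_sub, eval_X_pow, eval_one]
  field_simp
  ring

lemma trigSum (c d : ℕ → ℂ) :
    IsTrigPoly n (fun z => ∑ k ∈ Finset.range n, (c k * _root_.cosL k z + d k * _root_.sinL k z)) :=
  sum _ fun k hk => (((cosL k).const_mul (c k)).add ((sinL k).const_mul (d k))).mono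
    (Finset.mem_range.mp hk).le

lemma continuousOn (hf : IsTrigPoly n f) : ContinuousOn f {0}ᶜ := by
  obtain ⟨p, -, hfp⟩ := hf
  refine ContinuousOn.congr (f := fun z => p.eval z / z ^ n) ?_ fun z hz => ?_
  · exact p.continuous.continuousOn.div (continuous_pow n).continuousOn
      fun z hz => pow_ne_zero n hz
  · have hz : z ≠ 0 := hz
    simp only [← hfp z hz]
    field_simp

lemma continuousOn_sphere (hf : IsTrigPoly n f) : ContinuousOn f (sphere 0 1) :=
  hf.continuousOn.mono fun z hz h => by simp [Set.mem_singleton_iff.mp h] at hz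

end IsTrigPoly

lemma conj_eq_inv_of_mem_sphere {z : ℂ} (hz : z ∈ sphere (0 : ℂ) 1) :
    (starRingEnd ℂ) z = z⁻¹ :=
  (inv_eq_conj (mem_sphere_zero_iff_norm.mp hz)).symm

lemma innR_const_mul_right (μ : Measure ℂ) (f g : ℂ → ℂ) (c : ℂ) :
    innR μ f (fun z => c * g z) = c * innR μ f g := by
  simp only [innR, ← integral_const_mul]
  congr 1; funext z; ring

lemma innR_comm (μ : Measure ℂ) (f g : ℂ → ℂ) : innR μ f g = innR μ g f := by
  simp only [innR, mul_comm]

lemma innR_const_mul_left (μ : Measure ℂ) (f g : ℂ → ℂ) (c : ℂ) :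
    innR μ (fun z => c * f z) g = c * innR μ f g := by
  rw [innR_comm, innR_const_mul_right, innR_comm]

lemma integral_conj_mul_self (μ : Measure ℂ) (f : ℂ → ℂ) :
    ∫ τ, (starRingEnd ℂ) (f τ) * f τ ∂μ = ((∫ τ, ‖f τ‖ ^ 2 ∂μ : ℝ) : ℂ) := by
  simp only [conj_mul', ← ofReal_pow]
  exact integral_ofReal

section UnitCircle

variable {μ : Measure ℂ} (hμ : μ (sphere 0 1)ᶜ = 0)
include hμ

lemma ae_mem_sphere : ∀ᵐ τ ∂μ, τ ∈ sphere (0 : ℂ) 1 := ae_iff.mpr hμ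

lemma integral_conj_pow_mul_revP (N : ℕ) (Φ : ℂ[X]) {j : ℕ} (hj : j ≤ N) :
    ∫ τ, (starRingEnd ℂ) (τ ^ j) * revP N Φ τ ∂μ =
      (starRingEnd ℂ) (∫ τ, (starRingEnd ℂ) (τ ^ (N - j)) * Φ.eval τ ∂μ) := by
  rw [← integral_conj]
  refine integral_congr_ae ((ae_mem_sphere hμ).mono fun τ hτ => ?_)
  obtain ⟨m, rfl⟩ := Nat.exists_eq_add_of_le hj
  have hτ0 : τ ≠ 0 := ne_zero_of_mem_sphere one_ne_zero ⟨τ, hτ⟩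
  simp only [revP, map_mul, map_pow, map_inv₀, conj_eq_inv_of_mem_sphere hτ, inv_inv,
    Nat.add_sub_cancel_left, inv_pow]
  field_simp
  ring

variable [IsFiniteMeasure μ]

lemma integrable_of_continuousOn {E : Type*} [NormedAddCommGroup E] {f : ℂ → E}
    (hf : ContinuousOn f (sphere 0 1)) : Integrable f μ := by
  have h := hf.integrableOn_compact (μ := μ) (isCompact_sphere 0 1)
  rwa [IntegrableOn, Measure.restrict_eq_self_of_ae_mem (ae_mem_sphere hμ)] at h

lemma integrable_mul_of_continuousOn {f g : ℂ → ℂ} (hf : ContinuousOn f (sphere 0 1))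
    (hg : ContinuousOn g (sphere 0 1)) : Integrable (fun z => f z * g z) μ :=
  integrable_of_continuousOn hμ (hf.mul hg)

lemma integral_conj_eval_mul_eq_zero {g : ℂ → ℂ} (W : ℂ[X]) (hg : ContinuousOn g (sphere 0 1))
    (hW : ∀ j ∈ W.support, ∫ τ, (starRingEnd ℂ) (τ ^ j) * g τ ∂μ = 0) :
    ∫ τ, (starRingEnd ℂ) (W.eval τ) * g τ ∂μ = 0 := by
  have hconj (j : ℕ) : ContinuousOn (fun τ : ℂ => (starRingEnd ℂ) (τ ^ j)) (sphere 0 1) :=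
    (continuous_conj.comp (continuous_pow j)).continuousOn
  simp only [eval_eq_sum, Polynomial.sum_def, map_sum, map_mul, Finset.sum_mul, mul_assoc]
  rw [integral_finsetSum _ fun j _ =>
    (integrable_mul_of_continuousOn hμ (hconj j) hg).const_mul _]
  exact Finset.sum_eq_zero fun j hj => by rw [integral_const_mul, hW j hj, mul_zero]

lemma Polynomial.eq_zero_of_integral_conj_pow_mul_eval_eq_zero
    (hsupp : ∀ s : Finset ℂ, μ (s : Set ℂ)ᶜ ≠ 0) (R : ℂ[X])
    (hR : ∀ j ≤ R.natDegree, ∫ τ, (starRingEnd ℂ) (τ ^ j) * R.eval τ ∂μ = 0) : R = 0 := by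
  have hnorm : ∫ τ, ‖R.eval τ‖ ^ 2 ∂μ = 0 := by
    have h := integral_conj_eval_mul_eq_zero hμ R R.continuous.continuousOn
      fun j hj => hR j (le_natDegree_of_mem_supp j hj)
    rwa [integral_conj_mul_self, ofReal_eq_zero] at h
  have hae : ∀ᵐ τ ∂μ, R.eval τ = 0 := by
    have h := (integral_eq_zero_iff_of_nonneg (fun τ => sq_nonneg _)
      (integrable_of_continuousOn hμ (R.continuous.norm.pow 2).continuousOn)).mp hnorm
    filter_upwards [h] with τ hτ
    simpa using hτ
  by_contra hR0
  refine hsupp R.roots.toFinset (measure_mono_null (fun τ hτ => ?_) (ae_iff.mp hae))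
  simpa [hR0] using hτ

lemma Polynomial.Monic.integral_conj_pow_natDegree_mul_eval {Φ : ℂ[X]} (hΦ : Φ.Monic)
    (horth : ∀ j < Φ.natDegree, ∫ τ, (starRingEnd ℂ) (τ ^ j) * Φ.eval τ ∂μ = 0) :
    ∫ τ, (starRingEnd ℂ) (τ ^ Φ.natDegree) * Φ.eval τ ∂μ =
      ((∫ τ, ‖Φ.eval τ‖ ^ 2 ∂μ : ℝ) : ℂ) := by
  set N := Φ.natDegree
  have hlower : ∫ τ, (starRingEnd ℂ) ((Φ - X ^ N).eval τ) * Φ.eval τ ∂μ = 0 := by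
    refine integral_conj_eval_mul_eq_zero hμ _ Φ.continuous.continuousOn fun j hj => horth j ?_
    rw [mem_support_iff, coeff_sub, coeff_X_pow] at hj
    by_contra hNj
    rcases (not_lt.mp hNj).eq_or_lt with rfl | hlt
    · simp [show Φ.coeff N = 1 from hΦ.coeff_natDegree] at hj
    · simp [coeff_eq_zero_of_natDegree_lt hlt, hlt.ne'] at hj
  have hconj (W : ℂ[X]) : Integrable (fun τ => (starRingEnd ℂ) (W.eval τ) * Φ.eval τ) μ :=
    integrable_mul_of_continuousOn hμ (continuous_conj.comp W.continuous).continuousOn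
      Φ.continuous.continuousOn
  have hpow : Integrable (fun τ => (starRingEnd ℂ) (τ ^ N) * Φ.eval τ) μ := by
    simpa using hconj (X ^ N)
  rw [← integral_conj_mul_self, eq_comm, ← sub_eq_zero, ← integral_sub (hconj Φ) hpow]
  simpa [sub_mul] using hlower

variable {f g h : ℂ → ℂ} (hf : ContinuousOn f (sphere 0 1))
include hf

lemma innR_add_right (hg : ContinuousOn g (sphere 0 1)) (hh : ContinuousOn h (sphere 0 1)) :
    innR μ f (fun z => g z + h z) = innR μ f g + innR μ f h := by
  simp only [innR, mul_add]
  exact integral_add (integrable_mul_of_continuousOn hμ hf hg)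
    (integrable_mul_of_continuousOn hμ hf hh)

lemma innR_sum_right {ι : Type*} (s : Finset ι) {g : ι → ℂ → ℂ}
    (hg : ∀ i ∈ s, ContinuousOn (g i) (sphere 0 1)) :
    innR μ f (fun z => ∑ i ∈ s, g i z) = ∑ i ∈ s, innR μ f (g i) := by
  simp only [innR, Finset.mul_sum]
  exact integral_finsetSum s fun i hi => integrable_mul_of_continuousOn hμ hf (hg i hi)

lemma innR_const_mul_sub_const_mul_left (hg : ContinuousOn g (sphere 0 1))
    (hh : ContinuousOn h (sphere 0 1)) (c₁ c₂ : ℂ) :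
    innR μ (fun z => c₁ * f z - c₂ * g z) h = c₁ * innR μ f h - c₂ * innR μ g h := by
  simp only [innR, sub_mul, mul_assoc]
  rw [integral_sub ((integrable_mul_of_continuousOn hμ hf hh).const_mul c₁)
    ((integrable_mul_of_continuousOn hμ hg hh).const_mul c₂), integral_const_mul,
    integral_const_mul]

lemma innR_self_eq_of_orthogonal {n : ℕ} (c d : ℕ → ℂ) (hg : ContinuousOn g (sphere 0 1))
    (hfg : ∀ z ≠ 0, f z = g z + ∑ k ∈ Finset.range n, (c k * cosL k z + d k * sinL k z))
    (horth : ∀ k < n, innR μ f (cosL k) = 0 ∧ innR μ f (sinL k) = 0) :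
    innR μ f f = innR μ f g := by
  have hcos (k : ℕ) : ContinuousOn (fun z => c k * cosL k z) (sphere 0 1) :=
    ((IsTrigPoly.cosL k).const_mul (c k)).continuousOn_sphere
  have hsin (k : ℕ) : ContinuousOn (fun z => d k * sinL k z) (sphere 0 1) :=
    ((IsTrigPoly.sinL k).const_mul (d k)).continuousOn_sphere
  have hexpand : innR μ f f =
      innR μ f (fun z => g z + ∑ k ∈ Finset.range n, (c k * cosL k z + d k * sinL k z)) :=
    integral_congr_ae ((ae_mem_sphere hμ).mono fun z hz => by
      simp only
      rw [← hfg z (ne_zero_of_mem_sphere one_ne_zero ⟨z, hz⟩)])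
  rw [hexpand, innR_add_right hμ hf hg (IsTrigPoly.trigSum c d).continuousOn_sphere,
    innR_sum_right hμ hf (g := fun k z => c k * cosL k z + d k * sinL k z) _ fun k _ =>
      (hcos k).add (hsin k)]
  refine add_eq_left.mpr (Finset.sum_eq_zero fun k hk => ?_)
  obtain ⟨hc, hs⟩ := horth k (Finset.mem_range.mp hk)
  rw [innR_add_right hμ hf (hcos k) (hsin k),
    innR_const_mul_right, innR_const_mul_right, hc, hs]
  ring

lemma integral_conj_pow_sub_mul_eval {n k : ℕ} {p : ℂ[X]}
    (hp : ∀ z ≠ 0, z ^ n * f z = p.eval z) (hk : k ≤ n) :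
    ∫ τ, (starRingEnd ℂ) (τ ^ (n - k)) * p.eval τ ∂μ =
      innR μ f (cosL k) + I * innR μ f (sinL k) := by
  rw [← innR_const_mul_right, ← innR_add_right hμ hf (IsTrigPoly.cosL k).continuousOn_sphere
    ((IsTrigPoly.sinL k).const_mul I).continuousOn_sphere]
  refine integral_congr_ae ((ae_mem_sphere hμ).mono fun τ hτ => ?_)
  have hτ0 : τ ≠ 0 := ne_zero_of_mem_sphere one_ne_zero ⟨τ, hτ⟩
  obtain ⟨m, rfl⟩ := Nat.exists_eq_add_of_le' hk
  simp only [cosL_add_I_mul_sinL k hτ0, ← hp τ hτ0, map_pow, conj_eq_inv_of_mem_sphere hτ,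
    Nat.add_sub_cancel, inv_pow]
  field_simp
  ring

lemma integral_conj_pow_add_mul_eval {n k : ℕ} {p : ℂ[X]}
    (hp : ∀ z ≠ 0, z ^ n * f z = p.eval z) :
    ∫ τ, (starRingEnd ℂ) (τ ^ (n + k)) * p.eval τ ∂μ =
      innR μ f (cosL k) + -I * innR μ f (sinL k) := by
  rw [← innR_const_mul_right, ← innR_add_right hμ hf (IsTrigPoly.cosL k).continuousOn_sphere
    ((IsTrigPoly.sinL k).const_mul (-I)).continuousOn_sphere]
  refine integral_congr_ae ((ae_mem_sphere hμ).mono fun τ hτ => ?_)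
  have hτ0 : τ ≠ 0 := ne_zero_of_mem_sphere one_ne_zero ⟨τ, hτ⟩
  simp only [cosL_add_neg_I_mul_sinL k hτ0, ← hp τ hτ0, map_pow, conj_eq_inv_of_mem_sphere hτ,
    inv_pow]
  field_simp
  ring

end UnitCircle

attribute [instance] OTP.prob

lemma OTP.measure_compl_sphere (D : OTP) : D.μ (sphere 0 1)ᶜ = 0 := by
  convert D.circ using 3
  ext z
  simp

lemma OPUC.integral_conj_pow_mul_revP (D : OPUC) {N j : ℕ} (hj : j ≤ N) :
    ∫ τ, (starRingEnd ℂ) (τ ^ j) * revP N (D.Φ N) τ ∂D.μ =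
      if j = 0 then ((D.κ N : ℂ) ^ 2)⁻¹ else 0 := by
  have hμ := D.measure_compl_sphere
  rw [_root_.integral_conj_pow_mul_revP hμ N _ hj]
  split_ifs with hj0
  · have h := (D.Φ_monic N).integral_conj_pow_natDegree_mul_eval hμ
      (by simpa only [D.Φ_deg N] using D.Φ_orth N)
    rw [D.Φ_deg N] at h
    rw [hj0, Nat.sub_zero, h, conj_ofReal]
    exact eq_inv_of_mul_eq_one_right (by exact_mod_cast D.κ_def N)
  · rw [D.Φ_orth N (N - j) (by omega), map_zero]

theorem OPUC.eval_eq_kappa_sq_mul_revP (D : OPUC) {N : ℕ} {p : ℂ[X]} (hp : p.natDegree ≤ N)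
    (hmom : ∀ j ≤ N, ∫ τ, (starRingEnd ℂ) (τ ^ j) * p.eval τ ∂D.μ = if j = 0 then 1 else 0)
    {z : ℂ} (hz : z ≠ 0) :
    p.eval z = (D.κ N : ℂ) ^ 2 * revP N (D.Φ N) z := by
  have hμ := D.measure_compl_sphere
  set Q := reflect N ((D.Φ N).map (starRingEnd ℂ))
  have hQ {w : ℂ} (hw : w ≠ 0) : Q.eval w = revP N (D.Φ N) w :=
    eval_reflect_map_conj hw (D.Φ_deg N).le
  have hκ : (D.κ N : ℂ) ≠ 0 := ofReal_ne_zero.mpr (D.κ_pos N).ne'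
  suffices hR : p - C ((D.κ N : ℂ) ^ 2) * Q = 0 by
    rw [← hQ hz, sub_eq_zero.mp hR, eval_mul, eval_C]
  refine eq_zero_of_integral_conj_pow_mul_eval_eq_zero hμ D.nontriv _ fun j hj => ?_
  have hjN : j ≤ N :=
    hj.trans ((natDegree_sub_le _ _).trans (max_le hp ((natDegree_C_mul_le _ _).trans
      (natDegree_reflect_le.trans (max_le le_rfl (natDegree_map_le.trans (D.Φ_deg N).le))))))
  have hQmom : ∫ τ, (starRingEnd ℂ) (τ ^ j) * Q.eval τ ∂D.μ =
      ∫ τ, (starRingEnd ℂ) (τ ^ j) * revP N (D.Φ N) τ ∂D.μ :=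
    integral_congr_ae ((ae_mem_sphere hμ).mono fun τ hτ => by
      simp only [hQ (ne_zero_of_mem_sphere one_ne_zero ⟨τ, hτ⟩)])
  have hconj : ContinuousOn (fun τ : ℂ => (starRingEnd ℂ) (τ ^ j)) (sphere 0 1) :=
    (continuous_conj.comp (continuous_pow j)).continuousOn
  simp only [eval_sub, eval_mul, eval_C, mul_sub, mul_left_comm _ ((D.κ N : ℂ) ^ 2)]
  rw [integral_sub (integrable_mul_of_continuousOn hμ hconj p.continuous.continuousOn)
    ((integrable_mul_of_continuousOn hμ hconj Q.continuous.continuousOn).const_mul _),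
    integral_const_mul, hQmom, hmom j hjN, D.integral_conj_pow_mul_revP hjN]
  split_ifs
  · field_simp
    ring
  · ring

namespace OTP

/-- `z^{-n}` times the right-hand side of the mutual representation. -/
def evenRep (D : OTP) (n : ℕ) (z : ℂ) : ℂ :=
  1 / 2 * (D.a n : ℂ)⁻¹ * (1 + D.β n * I) * D.sig n z - 1 / 2 * I * (D.b n : ℂ)⁻¹ * D.pii n z

variable (D : OTP)

lemma a_ne_zero (n : ℕ) : (D.a n : ℂ) ≠ 0 := ofReal_ne_zero.mpr (D.ha n).ne'

lemma b_ne_zero (n : ℕ) : (D.b n : ℂ) ≠ 0 := ofReal_ne_zero.mpr (D.hb n).ne'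

variable {n : ℕ} (hn : 1 ≤ n)
include hn

lemma isTrigPoly_sig : IsTrigPoly n (D.sig n) := by
  obtain ⟨c, d, e, hspan⟩ := D.sig_span n hn
  have ha := D.a_ne_zero n
  refine ((((IsTrigPoly.cosL n).add ((IsTrigPoly.sinL n).const_mul e)).add
    (IsTrigPoly.trigSum (fun k => c k) (fun k => d k))).const_mul (D.a n : ℂ)⁻¹).congr
    fun z hz => ?_
  rw [← hspan z hz]
  field_simp

lemma isTrigPoly_pii : IsTrigPoly n (D.pii n) := by
  obtain ⟨c, d, hspan⟩ := D.pii_span n hn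
  have hb := D.b_ne_zero n
  refine (((IsTrigPoly.sinL n).add
    (IsTrigPoly.trigSum (fun k => c k) (fun k => d k))).const_mul (D.b n : ℂ)⁻¹).congr
    fun z hz => ?_
  rw [← hspan z hz]
  field_simp

lemma innR_sig_cosL_of_lt {k : ℕ} (hk : k < n) : innR D.μ (D.sig n) (cosL k) = 0 := by
  simpa [innR_const_mul_left, (D.ha n).ne'] using ((D.sig_orth n hn).1 k hk).1

lemma innR_sig_sinL {k : ℕ} (hk : k ≤ n) : innR D.μ (D.sig n) (sinL k) = 0 := by
  rcases hk.lt_or_eq with hk | hk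
  · simpa [innR_const_mul_left, (D.ha n).ne'] using ((D.sig_orth n hn).1 k hk).2
  · rw [hk]
    simpa [innR_const_mul_left, (D.ha n).ne'] using (D.sig_orth n hn).2

lemma innR_pii_cosL_of_lt {k : ℕ} (hk : k < n) : innR D.μ (D.pii n) (cosL k) = 0 := by
  simpa [innR_const_mul_left, (D.hb n).ne'] using (D.pii_orth n hn k hk).1

lemma innR_pii_sinL_of_lt {k : ℕ} (hk : k < n) : innR D.μ (D.pii n) (sinL k) = 0 := by
  simpa [innR_const_mul_left, (D.hb n).ne'] using (D.pii_orth n hn k hk).2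

lemma innR_pii_cosL_self : innR D.μ (D.pii n) (cosL n) = D.b n * D.β n := by
  have hb := D.b_ne_zero n
  rw [D.β_def n hn, innR_const_mul_right, innR_comm]
  field_simp

lemma innR_sig_cosL_self : innR D.μ (D.sig n) (cosL n) = D.a n := by
  have ha := D.a_ne_zero n
  obtain ⟨c, d, e, hspan⟩ := D.sig_span n hn
  have hσ := ((D.isTrigPoly_sig hn).const_mul (D.a n : ℂ)).continuousOn_sphere
  have hGS := innR_self_eq_of_orthogonal D.measure_compl_sphere hσ (fun k => c k) (fun k => d k)
    ((IsTrigPoly.cosL n).add ((IsTrigPoly.sinL n).const_mul e)).continuousOn_sphere hspan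
    (D.sig_orth n hn).1
  rw [← D.a_norm n hn, innR_add_right D.measure_compl_sphere hσ
    (IsTrigPoly.cosL n).continuousOn_sphere ((IsTrigPoly.sinL n).const_mul e).continuousOn_sphere,
    innR_const_mul_right, (D.sig_orth n hn).2, innR_const_mul_left] at hGS
  refine mul_left_cancel₀ ha ?_
  linear_combination -hGS

lemma innR_pii_sinL_self : innR D.μ (D.pii n) (sinL n) = D.b n := by
  have hb := D.b_ne_zero n
  obtain ⟨c, d, hspan⟩ := D.pii_span n hn
  have hπ := ((D.isTrigPoly_pii hn).const_mul (D.b n : ℂ)).continuousOn_sphere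
  have hGS := innR_self_eq_of_orthogonal D.measure_compl_sphere hπ (fun k => c k) (fun k => d k)
    (IsTrigPoly.sinL n).continuousOn_sphere hspan (D.pii_orth n hn)
  rw [← D.b_norm n hn, innR_const_mul_left] at hGS
  refine mul_left_cancel₀ hb ?_
  linear_combination -hGS

lemma isTrigPoly_evenRep : IsTrigPoly n (D.evenRep n) :=
  ((D.isTrigPoly_sig hn).const_mul _).sub ((D.isTrigPoly_pii hn).const_mul _)

lemma innR_evenRep_cosL {k : ℕ} (hk : k ≤ n) :
    innR D.μ (D.evenRep n) (cosL k) = if k = n then 1 / 2 else 0 := by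
  unfold evenRep
  rw [innR_const_mul_sub_const_mul_left D.measure_compl_sphere
    (D.isTrigPoly_sig hn).continuousOn_sphere (D.isTrigPoly_pii hn).continuousOn_sphere
    (IsTrigPoly.cosL k).continuousOn_sphere]
  rcases hk.lt_or_eq with hk | hk
  · rw [D.innR_sig_cosL_of_lt hn hk, D.innR_pii_cosL_of_lt hn hk, if_neg hk.ne]
    ring
  · subst hk
    have ha := D.a_ne_zero k
    have hb := D.b_ne_zero k
    rw [D.innR_sig_cosL_self hn, D.innR_pii_cosL_self hn, if_pos rfl]
    field_simp
    ring

lemma innR_evenRep_sinL {k : ℕ} (hk : k ≤ n) :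
    innR D.μ (D.evenRep n) (sinL k) = if k = n then -I / 2 else 0 := by
  unfold evenRep
  rw [innR_const_mul_sub_const_mul_left D.measure_compl_sphere
    (D.isTrigPoly_sig hn).continuousOn_sphere (D.isTrigPoly_pii hn).continuousOn_sphere
    (IsTrigPoly.sinL k).continuousOn_sphere, D.innR_sig_sinL hn hk]
  rcases hk.lt_or_eq with hk | hk
  · rw [D.innR_pii_sinL_of_lt hn hk, if_neg hk.ne]
    ring
  · subst hk
    have hb := D.b_ne_zero k
    rw [D.innR_pii_sinL_self hn, if_pos rfl]
    field_simp
    ring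

lemma integral_conj_pow_mul_eval_of_evenRep {p : ℂ[X]}
    (hp : ∀ z ≠ 0, z ^ n * D.evenRep n z = p.eval z) {j : ℕ} (hj : j ≤ 2 * n) :
    ∫ τ, (starRingEnd ℂ) (τ ^ j) * p.eval τ ∂D.μ = if j = 0 then 1 else 0 := by
  have hF := (D.isTrigPoly_evenRep hn).continuousOn_sphere
  rcases le_total j n with hjn | hnj
  · obtain ⟨k, hk, rfl⟩ : ∃ k ≤ n, j = n - k := ⟨n - j, by omega, by omega⟩
    rw [integral_conj_pow_sub_mul_eval D.measure_compl_sphere hF hp hk,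
      D.innR_evenRep_cosL hn hk, D.innR_evenRep_sinL hn hk]
    by_cases hkn : k = n
    · rw [if_pos hkn, if_pos hkn, if_pos (by omega)]
      linear_combination (-1 / 2 : ℂ) * I_sq
    · rw [if_neg hkn, if_neg hkn, if_neg (by omega)]
      ring
  · obtain ⟨k, hk, rfl⟩ : ∃ k ≤ n, j = n + k := ⟨j - n, by omega, by omega⟩
    rw [integral_conj_pow_add_mul_eval D.measure_compl_sphere hF hp,
      D.innR_evenRep_cosL hn hk, D.innR_evenRep_sinL hn hk, if_neg (show n + k ≠ 0 by omega)]
    split_ifs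
    · linear_combination (1 / 2 : ℂ) * I_sq
    · ring

end OTP

/-- Mutual representation, even case: for `n ≥ 1` and `z ≠ 0`,
`κ_{2n}² Φ*_{2n}(z) = (1/2) z^n [a_n⁻¹ (1 + β_n i) σ_n(z) - i b_n⁻¹ π_n(z)]`. -/
theorem mutual_representation_even (D : OPUC) (n : ℕ) (hn : 1 ≤ n) (z : ℂ) (hz : z ≠ 0) :
    ((D.κ (2 * n) : ℂ)) ^ 2 * revP (2 * n) (D.Φ (2 * n)) z =
      (1 / 2) * z ^ n *
        (((D.a n : ℂ))⁻¹ * (1 + (D.β n : ℂ) * I) * D.sig n z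
          - I * ((D.b n : ℂ))⁻¹ * D.pii n z) := by
  obtain ⟨p, hpdeg, hp⟩ := D.isTrigPoly_evenRep hn
  rw [← D.eval_eq_kappa_sq_mul_revP hpdeg
    (fun j hj => D.integral_conj_pow_mul_eval_of_evenRep hn hp hj) hz, ← hp z hz, OTP.evenRep]
  ring
end
end

section
/- For every integer n ≥ 1 and every z ∈ ℂ \ {0}, a_n σ_n(z) = −(1/2) z^{−n} [Λ_n^{−1} b_n^{−2} i z Φ_{2n−1}(z) − (1 − β_n i) Φ*_{2n}(z)], where Λ_n = −(1/2)[a_n^{−2}(1 + β_n²) + b_n^{−2}] i and Φ*_{2n} is the reversed polynomial of Φ_{2n}. -/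
open MeasureTheory Complex Filter

noncomputable section

/-- `Λ_n = -(1/2) * (a n ^ (-2) * (1 + β n ^ 2) + b n ^ (-2)) * i`. -/
def Lam (D : OTP) (n : ℕ) : ℂ :=
  -(1 / 2) * ((((D.a n : ℂ)) ^ 2)⁻¹ * (1 + (D.β n : ℂ) ^ 2) + (((D.b n : ℂ)) ^ 2)⁻¹) * I

/-!
On the circle `z ^ n * a_n σ_n(z)` is a polynomial `P` of degree `2n`, and the real
orthogonality of `σ_n` to `cos kθ, sin kθ` (`k < n`) says exactly that `P` is orthogonal in
`⟨·,·⟩_C` to `z, …, z^(2n-1)`. Such polynomials form the span of `Φ*_{2n}` and `z Φ_{2n-1}`, so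
`P = P(0) Φ*_{2n} + t z Φ_{2n-1}`; likewise for `b_n π_n`. The remaining relations
(orthogonality to `sin nθ`, the norms, the definition of `β_n`) and the Szegő recursion
express `P(0)`, `t`, `a_n`, `b_n`, `β_n` through `‖Φ_{2n-1}‖²` and `Φ_{2n}(0)`. In particular
`Λ_n = -2i / ‖Φ_{2n}‖²`, and one finds `2 P(0) = 1 - β_n i` and `t = -(1/2) Λ_n⁻¹ b_n⁻² i`.
-/

open Polynomial ComplexConjugate

section Moments

variable {μ : Measure ℂ}

/-- For `μ` on the circle, `polyMoment μ (-j) Q = ⟨τ ^ j, Q⟩_C`. -/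
def polyMoment (μ : Measure ℂ) (j : ℤ) (Q : ℂ[X]) : ℂ := ∫ τ, τ ^ j * Q.eval τ ∂μ

theorem polyMoment_C_mul (j : ℤ) (a : ℂ) (Q : ℂ[X]) :
    polyMoment μ j (C a * Q) = a * polyMoment μ j Q := by
  simp only [polyMoment, eval_mul, eval_C, mul_left_comm _ a]
  exact integral_const_mul a _

variable (hμ : ∀ᵐ τ ∂μ, ‖τ‖ = 1)
include hμ

theorem ae_ne_zero_of_circle : ∀ᵐ τ ∂μ, τ ≠ 0 := by
  filter_upwards [hμ] with τ h h0
  simp [h0] at h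

theorem ae_conj_eq_inv_of_circle : ∀ᵐ τ ∂μ, conj τ = τ⁻¹ := by
  filter_upwards [hμ] with τ h using (Complex.inv_eq_conj h).symm

theorem exists_ae_bound_eval (Q : ℂ[X]) : ∃ C, ∀ᵐ τ ∂μ, ‖Q.eval τ‖ ≤ C := by
  obtain ⟨C, hC⟩ :=
    (isCompact_sphere (0 : ℂ) 1).exists_bound_of_continuousOn Q.continuous.continuousOn
  exact ⟨C, by filter_upwards [hμ] with τ h using hC τ (by simpa using h)⟩

theorem polyMoment_X_pow_mul (j : ℤ) (i : ℕ) (Q : ℂ[X]) :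
    polyMoment μ j (X ^ i * Q) = polyMoment μ (j + i) Q := by
  refine integral_congr_ae ?_
  filter_upwards [ae_ne_zero_of_circle hμ] with τ hτ
  simp only [eval_mul, eval_pow, eval_X, zpow_add₀ hτ, zpow_natCast]
  ring

theorem polyMoment_X_mul (j : ℤ) (Q : ℂ[X]) :
    polyMoment μ j (X * Q) = polyMoment μ (j + 1) Q := by
  simpa using polyMoment_X_pow_mul hμ j 1 Q

theorem integral_zpow_mul_conj_eval (j : ℤ) (Q : ℂ[X]) :
    ∫ τ, τ ^ j * conj (Q.eval τ) ∂μ = conj (polyMoment μ (-j) Q) := by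
  rw [polyMoment, ← integral_conj]
  refine integral_congr_ae ?_
  filter_upwards [ae_conj_eq_inv_of_circle hμ] with τ h
  rw [map_mul, map_zpow₀, h, inv_zpow', neg_neg]

variable [IsFiniteMeasure μ]

theorem integrable_zpow_mul_eval (j : ℤ) (Q : ℂ[X]) :
    Integrable (fun τ => τ ^ j * Q.eval τ) μ := by
  obtain ⟨C, hC⟩ := exists_ae_bound_eval hμ Q
  refine .of_bound ((measurable_id.pow_const j).mul Q.continuous.measurable).aestronglyMeasurable
    C ?_
  filter_upwards [hμ, hC] with τ h hτ
  rwa [norm_mul, norm_zpow, h, one_zpow, one_mul]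

theorem integrable_norm_eval_sq (Q : ℂ[X]) : Integrable (fun τ => ‖Q.eval τ‖ ^ 2) μ := by
  obtain ⟨C, hC⟩ := exists_ae_bound_eval hμ Q
  refine .of_bound (Q.continuous.norm.pow 2).aestronglyMeasurable (C ^ 2) ?_
  filter_upwards [hC] with τ hτ
  rw [norm_pow, norm_norm]
  exact pow_le_pow_left₀ (norm_nonneg _) hτ 2

theorem polyMoment_add (j : ℤ) (P Q : ℂ[X]) :
    polyMoment μ j (P + Q) = polyMoment μ j P + polyMoment μ j Q := by
  simp only [polyMoment, eval_add, mul_add]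
  exact integral_add (integrable_zpow_mul_eval hμ j P) (integrable_zpow_mul_eval hμ j Q)

theorem polyMoment_sub (j : ℤ) (P Q : ℂ[X]) :
    polyMoment μ j (P - Q) = polyMoment μ j P - polyMoment μ j Q := by
  simp only [polyMoment, eval_sub, mul_sub]
  exact integral_sub (integrable_zpow_mul_eval hμ j P) (integrable_zpow_mul_eval hμ j Q)

theorem polyMoment_sum {ι : Type*} (j : ℤ) (s : Finset ι) (Q : ι → ℂ[X]) :
    polyMoment μ j (∑ i ∈ s, Q i) = ∑ i ∈ s, polyMoment μ j (Q i) := by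
  simp only [polyMoment, eval_finsetSum, Finset.mul_sum]
  exact integral_finsetSum s fun i _ => integrable_zpow_mul_eval hμ j (Q i)

theorem polyMoment_mul (j : ℤ) (P Q : ℂ[X]) {m : ℕ} (hQ : Q.natDegree ≤ m) :
    polyMoment μ j (P * Q) = ∑ i ∈ Finset.range (m + 1), Q.coeff i * polyMoment μ (j + i) P := by
  conv_lhs => rw [Q.as_sum_range' (m + 1) (Nat.lt_succ_of_le hQ), Finset.mul_sum]
  rw [polyMoment_sum hμ]
  refine Finset.sum_congr rfl fun i _ => ?_
  rw [← C_mul_X_pow_eq_monomial, mul_left_comm, mul_comm P, polyMoment_C_mul,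
    polyMoment_X_pow_mul hμ]

end Moments

/-- The reversed polynomial `Q*` (for `N = deg Q`) as a polynomial, see `eval_conjReflect`. -/
def conjReflect (N : ℕ) (Q : ℂ[X]) : ℂ[X] := (Q.reflect N).map conj

theorem coeff_conjReflect {N i : ℕ} (Q : ℂ[X]) (hi : i ≤ N) :
    (conjReflect N Q).coeff i = conj (Q.coeff (N - i)) := by
  rw [conjReflect, coeff_map, coeff_reflect, revAt_le hi]

theorem natDegree_conjReflect_le {N : ℕ} {Q : ℂ[X]} (hQ : Q.natDegree ≤ N) :
    (conjReflect N Q).natDegree ≤ N :=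
  natDegree_map_le.trans (natDegree_reflect_le.trans (max_le le_rfl hQ))

theorem eval_conjReflect {N : ℕ} {Q : ℂ[X]} (hQ : Q.natDegree ≤ N) {z : ℂ} (hz : z ≠ 0) :
    (conjReflect N Q).eval z = revP N Q z := by
  let := invertibleOfNonzero (inv_ne_zero hz)
  have h := eval₂_reflect_mul_pow conj z⁻¹ N Q hQ
  rw [invOf_eq_inv, inv_inv] at h
  rw [conjReflect, eval_map, revP, eval, hom_eval₂, map_inv₀, Complex.conj_conj,
    RingHom.comp_id, ← h, inv_pow, mul_comm, inv_mul_cancel_right₀ (pow_ne_zero N hz)]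

section Orthogonality

variable {μ : Measure ℂ} (hμ : ∀ᵐ τ ∂μ, ‖τ‖ = 1)
include hμ

theorem polyMoment_conjReflect {N : ℕ} {Q : ℂ[X]} (hQ : Q.natDegree ≤ N) (j : ℤ) :
    polyMoment μ j (conjReflect N Q) = conj (polyMoment μ (-j - N) Q) := by
  rw [← neg_add', ← integral_zpow_mul_conj_eval hμ]
  refine integral_congr_ae ?_
  filter_upwards [hμ, ae_ne_zero_of_circle hμ] with τ h hτ
  rw [eval_conjReflect hQ hτ, revP, ← Complex.inv_eq_conj h, inv_inv, zpow_add₀ hτ,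
    zpow_natCast, mul_assoc]

variable [IsFiniteMeasure μ]

theorem integral_norm_eval_sq_eq_sum (Q : ℂ[X]) :
    ((∫ τ, ‖Q.eval τ‖ ^ 2 ∂μ : ℝ) : ℂ) =
      ∑ j ∈ Q.support, conj (Q.coeff j) * polyMoment μ (-j) Q := by
  have hconj : ∀ᵐ τ ∂μ, ((‖Q.eval τ‖ ^ 2 : ℝ) : ℂ) =
      ∑ j ∈ Q.support, conj (Q.coeff j) * (τ ^ (-(j : ℤ)) * Q.eval τ) := by
    filter_upwards [ae_conj_eq_inv_of_circle hμ] with τ h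
    rw [Complex.ofReal_pow, ← Complex.conj_mul', eval_eq_sum, sum_def, map_sum, Finset.sum_mul]
    refine Finset.sum_congr rfl fun j _ => ?_
    rw [map_mul, map_pow, h, zpow_neg, zpow_natCast, inv_pow, mul_assoc]
  rw [← integral_complex_ofReal, integral_congr_ae hconj,
    integral_finsetSum _ fun j _ => (integrable_zpow_mul_eval hμ _ Q).const_mul _]
  exact Finset.sum_congr rfl fun j _ => integral_const_mul _ _

theorem eq_zero_of_polyMoment_eq_zero (hnt : ∀ s : Finset ℂ, μ (s : Set ℂ)ᶜ ≠ 0) {Q : ℂ[X]}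
    (h : ∀ j, Q.coeff j ≠ 0 → polyMoment μ (-j) Q = 0) : Q = 0 := by
  have hint : ∫ τ, ‖Q.eval τ‖ ^ 2 ∂μ = 0 := by
    exact_mod_cast (integral_norm_eval_sq_eq_sum hμ Q).trans
      (Finset.sum_eq_zero fun j hj => by rw [h j (mem_support_iff.1 hj), mul_zero])
  have hae : ∀ᵐ τ ∂μ, Q.eval τ = 0 := by
    filter_upwards [(integral_eq_zero_iff_of_nonneg (fun τ => by positivity)
      (integrable_norm_eval_sq hμ Q)).1 hint] with τ hτ
    simpa using hτ
  by_contra hQ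
  exact hnt Q.roots.toFinset (ae_iff.1 (hae.mono fun τ hτ => by simpa [hQ] using hτ))

theorem eq_zero_of_coeff_zero_of_polyMoment_eq_zero
    (hnt : ∀ s : Finset ℂ, μ (s : Set ℂ)ᶜ ≠ 0) {m : ℕ} {Q : ℂ[X]} (hQ : Q.natDegree ≤ m)
    (h0 : Q.coeff 0 = 0) (h : ∀ j : ℕ, 1 ≤ j → j ≤ m → polyMoment μ (-j) Q = 0) : Q = 0 :=
  eq_zero_of_polyMoment_eq_zero hμ hnt fun j hj =>
    h j (Nat.one_le_iff_ne_zero.2 fun h => hj (h ▸ h0)) ((le_natDegree_of_ne_zero hj).trans hQ)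

end Orthogonality

structure IsOPUC (μ : Measure ℂ) (m : ℕ) (F : ℂ[X]) : Prop extends F.IsMonicOfDegree m where
  polyMoment_eq_zero : ∀ j < m, polyMoment μ (-j) F = 0

namespace IsOPUC

variable {μ : Measure ℂ} {m : ℕ} {F : ℂ[X]} (hF : IsOPUC μ m F)
include hF

theorem coeff_conjReflect_zero : (conjReflect m F).coeff 0 = 1 := by
  rw [coeff_conjReflect F (Nat.zero_le m), Nat.sub_zero, ← hF.natDegree_eq,
    hF.monic.coeff_natDegree, map_one]

variable (hμ : ∀ᵐ τ ∂μ, ‖τ‖ = 1)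
include hμ

theorem polyMoment_conjReflect_eq_zero {j : ℕ} (hj : 1 ≤ j) (hjm : j ≤ m) :
    polyMoment μ (-j) (conjReflect m F) = 0 := by
  rw [polyMoment_conjReflect hμ hF.natDegree_eq.le, neg_neg,
    show (j : ℤ) - m = -((m - j : ℕ) : ℤ) by omega, hF.polyMoment_eq_zero _ (by omega), map_zero]

variable [IsFiniteMeasure μ]

theorem polyMoment_self_eq_integral :
    polyMoment μ (-m) F = ((∫ τ, ‖F.eval τ‖ ^ 2 ∂μ : ℝ) : ℂ) := by
  rw [integral_norm_eval_sq_eq_sum hμ, Finset.sum_eq_single m]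
  · rw [← hF.natDegree_eq, hF.monic.coeff_natDegree, map_one, one_mul]
  · intro j hj hjm
    rw [hF.polyMoment_eq_zero j (lt_of_le_of_ne (hF.natDegree_eq ▸ le_natDegree_of_mem_supp j hj)
      hjm), mul_zero]
  · intro hm
    rw [notMem_support_iff.1 hm, map_zero, zero_mul]

theorem conj_polyMoment_self : conj (polyMoment μ (-m) F) = polyMoment μ (-m) F := by
  rw [hF.polyMoment_self_eq_integral hμ, Complex.conj_ofReal]

theorem polyMoment_self_ne_zero (hnt : ∀ s : Finset ℂ, μ (s : Set ℂ)ᶜ ≠ 0) :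
    polyMoment μ (-m) F ≠ 0 := fun h0 =>
  hF.monic.ne_zero <| eq_zero_of_polyMoment_eq_zero hμ hnt fun j hj =>
    (lt_or_eq_of_le (hF.natDegree_eq ▸ le_natDegree_of_ne_zero hj)).elim
      (hF.polyMoment_eq_zero j) (fun h => h ▸ h0)

theorem eq_C_mul_conjReflect (hnt : ∀ s : Finset ℂ, μ (s : Set ℂ)ᶜ ≠ 0) {Q : ℂ[X]}
    (hQ : Q.natDegree ≤ m) (horth : ∀ j : ℕ, 1 ≤ j → j ≤ m → polyMoment μ (-j) Q = 0) :
    Q = C (Q.coeff 0) * conjReflect m F := by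
  rw [← sub_eq_zero]
  refine eq_zero_of_coeff_zero_of_polyMoment_eq_zero hμ hnt (m := m) ?_ ?_ fun j hj hjm => ?_
  · exact (natDegree_sub_le _ _).trans
      (max_le hQ ((natDegree_C_mul_le _ _).trans (natDegree_conjReflect_le hF.natDegree_eq.le)))
  · rw [coeff_sub, coeff_C_mul, hF.coeff_conjReflect_zero, mul_one, sub_self]
  · rw [polyMoment_sub hμ, polyMoment_C_mul, horth j hj hjm,
      hF.polyMoment_conjReflect_eq_zero hμ hj hjm, mul_zero, sub_zero]

section Recursion

variable {F' : ℂ[X]} (hF' : IsOPUC μ (m + 1) F')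
  (hnt : ∀ s : Finset ℂ, μ (s : Set ℂ)ᶜ ≠ 0)
include hF' hnt

/-- Szegő recursion `Φ_{m+1} = z Φ_m - conj α_m Φ_m*`, with `-conj α_m = Φ_{m+1}(0)`. -/
theorem X_mul_sub_eq : X * F - F' = C (-F'.coeff 0) * conjReflect m F := by
  have hdeg := ((isMonicOfDegree_X ℂ).mul hF.toIsMonicOfDegree).natDegree_sub_lt
    (by omega) (add_comm 1 m ▸ hF'.toIsMonicOfDegree)
  have hc : (X * F - F').coeff 0 = -F'.coeff 0 := by simp [mul_coeff_zero]
  refine hc ▸ hF.eq_C_mul_conjReflect hμ hnt (by omega) fun j hj hjm => ?_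
  rw [polyMoment_sub hμ, polyMoment_X_mul hμ, show -(j : ℤ) + 1 = -((j - 1 : ℕ) : ℤ) by omega,
    hF.polyMoment_eq_zero _ (by omega), hF'.polyMoment_eq_zero _ (by omega), sub_zero]

theorem polyMoment_one : polyMoment μ 1 F = -F'.coeff 0 * polyMoment μ (-m) F := by
  have h := congrArg (polyMoment μ 0) (hF.X_mul_sub_eq hμ hF' hnt)
  have h0 : polyMoment μ 0 F' = 0 := by simpa using hF'.polyMoment_eq_zero 0 (by omega)
  rwa [polyMoment_sub hμ, polyMoment_X_mul hμ, polyMoment_C_mul,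
    polyMoment_conjReflect hμ hF.natDegree_eq.le, neg_zero, zero_sub,
    hF.conj_polyMoment_self hμ, h0, zero_add, sub_zero] at h

theorem polyMoment_succ_self :
    polyMoment μ (-(m + 1 : ℕ)) F' =
      polyMoment μ (-m) F * (1 - F'.coeff 0 * conj (F'.coeff 0)) := by
  have h := congrArg (polyMoment μ (-(m + 1 : ℕ))) (hF.X_mul_sub_eq hμ hF' hnt)
  rw [polyMoment_sub hμ, polyMoment_X_mul hμ, polyMoment_C_mul,
    polyMoment_conjReflect hμ hF.natDegree_eq.le, show -((m + 1 : ℕ) : ℤ) + 1 = -m by omega,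
    show -(-((m + 1 : ℕ) : ℤ)) - m = 1 by omega, hF.polyMoment_one hμ hF' hnt, map_mul, map_neg,
    hF.conj_polyMoment_self hμ] at h
  linear_combination -h

variable {Q : ℂ[X]} (hQ : Q.natDegree ≤ m + 1)
  (horth : ∀ j : ℕ, 1 ≤ j → j ≤ m → polyMoment μ (-j) Q = 0)
include hQ horth

theorem eq_add_of_orth :
    Q = C (Q.coeff 0) * conjReflect (m + 1) F' +
      C (Q.coeff (m + 1) - Q.coeff 0 * conj (F'.coeff 0)) * (X * F) := by
  have hXF : (X * F).natDegree ≤ m + 1 :=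
    natDegree_mul_le.trans (by rw [natDegree_X, hF.natDegree_eq, add_comm])
  have hXF_top : (X * F).coeff (m + 1) = 1 := by
    rw [coeff_X_mul, ← hF.natDegree_eq, hF.monic.coeff_natDegree]
  have hF'_top : (conjReflect (m + 1) F').coeff (m + 1) = conj (F'.coeff 0) := by
    rw [coeff_conjReflect _ le_rfl, Nat.sub_self]
  rw [← sub_eq_zero]
  refine eq_zero_of_coeff_zero_of_polyMoment_eq_zero hμ hnt (m := m) ?_ ?_ fun j hj hjm => ?_
  · refine natDegree_le_pred (n := m + 1) ?_ ?_
    · exact (natDegree_sub_le_of_le hQ <| natDegree_add_le_of_degree_le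
        ((natDegree_C_mul_le _ _).trans (natDegree_conjReflect_le hF'.natDegree_eq.le))
        ((natDegree_C_mul_le _ _).trans hXF)).trans (max_self _).le
    · rw [coeff_sub, coeff_add, coeff_C_mul, coeff_C_mul, hF'_top, hXF_top]
      ring
  · rw [coeff_sub, coeff_add, coeff_C_mul, coeff_C_mul, hF'.coeff_conjReflect_zero,
      mul_coeff_zero, coeff_X_zero]
    ring
  · rw [polyMoment_sub hμ, polyMoment_add hμ, polyMoment_C_mul, polyMoment_C_mul,
      hF'.polyMoment_conjReflect_eq_zero hμ hj (by omega), polyMoment_X_mul hμ,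
      show -(j : ℤ) + 1 = -((j - 1 : ℕ) : ℤ) by omega, hF.polyMoment_eq_zero _ (by omega),
      horth j hj hjm]
    ring

theorem polyMoment_zero_of_orth :
    polyMoment μ 0 Q = (Q.coeff 0 * (1 - F'.coeff 0 * conj (F'.coeff 0)) -
      (Q.coeff (m + 1) - Q.coeff 0 * conj (F'.coeff 0)) * F'.coeff 0) *
        polyMoment μ (-m) F := by
  conv_lhs => rw [hF.eq_add_of_orth hμ hF' hnt hQ horth]
  rw [polyMoment_add hμ, polyMoment_C_mul,
    polyMoment_C_mul, polyMoment_conjReflect hμ hF'.natDegree_eq.le, neg_zero, zero_sub,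
    hF'.conj_polyMoment_self hμ, hF.polyMoment_succ_self hμ hF' hnt, polyMoment_X_mul hμ,
    zero_add, hF.polyMoment_one hμ hF' hnt]
  ring

theorem polyMoment_neg_succ_of_orth :
    polyMoment μ (-(m + 1 : ℕ)) Q =
      (Q.coeff (m + 1) - Q.coeff 0 * conj (F'.coeff 0)) * polyMoment μ (-m) F := by
  have h0 : polyMoment μ 0 F' = 0 := by simpa using hF'.polyMoment_eq_zero 0 (by omega)
  conv_lhs => rw [hF.eq_add_of_orth hμ hF' hnt hQ horth]
  rw [polyMoment_add hμ, polyMoment_C_mul,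
    polyMoment_C_mul, polyMoment_conjReflect hμ hF'.natDegree_eq.le, polyMoment_X_mul hμ,
    show -(-((m + 1 : ℕ) : ℤ)) - ((m + 1 : ℕ) : ℤ) = 0 by omega,
    show -((m + 1 : ℕ) : ℤ) + 1 = -m by omega, h0, map_zero, mul_zero, zero_add]

end Recursion

end IsOPUC

def HasPolyRep (f : ℂ → ℂ) (n : ℕ) (P : ℂ[X]) : Prop :=
  ∀ z ≠ 0, f z = z ^ (-(n : ℤ)) * P.eval z

def cosPoly (k : ℕ) : ℂ[X] := C (1 / 2) * (X ^ (2 * k) + 1)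

def sinPoly (k : ℕ) : ℂ[X] := C (-I / 2) * (X ^ (2 * k) - 1)

theorem hasPolyRep_cosL (k : ℕ) : HasPolyRep (cosL k) k (cosPoly k) := by
  intro z hz
  simp only [cosL, cosPoly, eval_mul, eval_C, eval_add, eval_pow, eval_X, eval_one, zpow_neg,
    zpow_natCast]
  field_simp
  ring

theorem hasPolyRep_sinL (k : ℕ) : HasPolyRep (sinL k) k (sinPoly k) := by
  intro z hz
  simp only [sinL, sinPoly, eval_mul, eval_C, eval_sub, eval_pow, eval_X, eval_one, zpow_neg,
    zpow_natCast]
  field_simp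
  linear_combination (z ^ (2 * k) - 1) * I_sq

namespace HasPolyRep

variable {f g : ℂ → ℂ} {n k : ℕ} {P Q : ℂ[X]}

theorem add (hf : HasPolyRep f n P) (hg : HasPolyRep g n Q) :
    HasPolyRep (fun z => f z + g z) n (P + Q) := fun z hz => by
  simp only [hf z hz, hg z hz, eval_add, mul_add]

theorem const_mul (hf : HasPolyRep f n P) (a : ℂ) :
    HasPolyRep (fun z => a * f z) n (C a * P) := fun z hz => by
  simp only [hf z hz, eval_mul, eval_C, mul_left_comm]

theorem X_pow_mul (hf : HasPolyRep f k P) (hkn : k ≤ n) :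
    HasPolyRep f n (X ^ (n - k) * P) := fun z hz => by
  rw [hf z hz, eval_mul, eval_pow, eval_X, ← mul_assoc, ← zpow_natCast, ← zpow_add₀ hz]
  congr 2
  omega

theorem sum {ι : Type*} (s : Finset ι) {f : ι → ℂ → ℂ} {P : ι → ℂ[X]}
    (hf : ∀ i ∈ s, HasPolyRep (f i) n (P i)) :
    HasPolyRep (fun z => ∑ i ∈ s, f i z) n (∑ i ∈ s, P i) := fun z hz => by
  rw [eval_finsetSum, Finset.mul_sum]
  exact Finset.sum_congr rfl fun i hi => hf i hi z hz

end HasPolyRep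

theorem exists_hasPolyRep_trig {n : ℕ} (hn : 1 ≤ n) (u v : ℂ) (c d : ℕ → ℝ) :
    ∃ P : ℂ[X], HasPolyRep (fun z => u * cosL n z + v * sinL n z +
        ∑ k ∈ Finset.range n, ((c k : ℂ) * cosL k z + (d k : ℂ) * sinL k z)) n P ∧
      P.natDegree ≤ 2 * n ∧ P.coeff 0 = (u + v * I) / 2 ∧ P.coeff (2 * n) = (u - v * I) / 2 := by
  set L := ∑ k ∈ Finset.range n, X ^ (n - k) * (C (c k : ℂ) * cosPoly k + C (d k : ℂ) * sinPoly k)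
  have hL : HasPolyRep
      (fun z => ∑ k ∈ Finset.range n, ((c k : ℂ) * cosL k z + (d k : ℂ) * sinL k z)) n L :=
    .sum _ fun k hk => (((hasPolyRep_cosL k).const_mul _).add
      ((hasPolyRep_sinL k).const_mul _)).X_pow_mul (Finset.mem_range.1 hk).le
  have hL_deg : L.natDegree ≤ 2 * n - 1 := by
    refine natDegree_sum_le_of_forall_le _ _ fun k hk => ?_
    have := Finset.mem_range.1 hk
    unfold cosPoly sinPoly
    compute_degree
    omega
  have hL0 : L.coeff 0 = 0 := by
    rw [finsetSum_coeff]
    refine Finset.sum_eq_zero fun k hk => ?_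
    rw [coeff_X_pow_mul', if_neg (by have := Finset.mem_range.1 hk; omega)]
  have hn0 : n ≠ 0 := by omega
  refine ⟨C u * cosPoly n + C v * sinPoly n + L,
    (((hasPolyRep_cosL n).const_mul u).add ((hasPolyRep_sinL n).const_mul v)).add hL, ?_, ?_, ?_⟩
  · refine natDegree_add_le_of_degree_le ?_ (hL_deg.trans (Nat.sub_le _ _))
    unfold cosPoly sinPoly
    compute_degree
  · simp [cosPoly, sinPoly, coeff_one, hL0, hn0]
    ring
  · have hL_top : L.coeff (2 * n) = 0 := coeff_eq_zero_of_natDegree_lt (by omega)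
    simp [cosPoly, sinPoly, coeff_one, hL_top, hn0]
    ring

namespace HasPolyRep

variable {μ : Measure ℂ} (hμ : ∀ᵐ τ ∂μ, ‖τ‖ = 1) {f g : ℂ → ℂ} {n k : ℕ} {P Q : ℂ[X]}
include hμ

theorem innR_eq (hf : HasPolyRep f n P) (hg : HasPolyRep g k Q) :
    innR μ f g = polyMoment μ (-(n + k : ℕ)) (P * Q) := by
  refine integral_congr_ae ?_
  filter_upwards [ae_ne_zero_of_circle hμ] with τ hτ
  rw [hf τ hτ, hg τ hτ, eval_mul, Nat.cast_add, neg_add, zpow_add₀ hτ]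
  ring

variable [IsFiniteMeasure μ] (hf : HasPolyRep f n P)
include hf

theorem innR_cosL (k : ℕ) :
    innR μ f (cosL k) = (polyMoment μ (k - n) P + polyMoment μ (-(n + k : ℕ)) P) / 2 := by
  rw [hf.innR_eq hμ (hasPolyRep_cosL k),
    show P * cosPoly k = C (1 / 2) * (X ^ (2 * k) * P + P) by rw [cosPoly]; ring,
    polyMoment_C_mul, polyMoment_add hμ, polyMoment_X_pow_mul hμ]
  push_cast
  ring_nf

theorem innR_sinL (k : ℕ) :
    innR μ f (sinL k) = -I / 2 * (polyMoment μ (k - n) P - polyMoment μ (-(n + k : ℕ)) P) := by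
  rw [hf.innR_eq hμ (hasPolyRep_sinL k),
    show P * sinPoly k = C (-I / 2) * (X ^ (2 * k) * P - P) by rw [sinPoly]; ring,
    polyMoment_C_mul, polyMoment_sub hμ, polyMoment_X_pow_mul hμ]
  push_cast
  ring_nf

theorem polyMoment_eq_zero_of_innR_eq_zero
    (horth : ∀ k < n, innR μ f (cosL k) = 0 ∧ innR μ f (sinL k) = 0) :
    ∀ j : ℕ, 1 ≤ j → j ≤ 2 * n - 1 → polyMoment μ (-j) P = 0 := by
  have hboth : ∀ k < n, polyMoment μ (k - n) P = 0 ∧ polyMoment μ (-(n + k : ℕ)) P = 0 := by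
    intro k hk
    obtain ⟨hcos, hsin⟩ := horth k hk
    rw [hf.innR_cosL hμ] at hcos
    rw [hf.innR_sinL hμ, mul_eq_zero, div_eq_zero_iff] at hsin
    have hsin' := hsin.resolve_left (by simp [I_ne_zero])
    exact ⟨by linear_combination hcos + hsin' / 2, by linear_combination hcos - hsin' / 2⟩
  intro j hj hjn
  rcases le_or_gt j n with h | h
  · simpa [Nat.cast_sub h] using (hboth (n - j) (by omega)).1
  · simpa [Nat.add_sub_cancel' h.le] using (hboth (j - n) (by omega)).2

theorem innR_self (hn : n ≠ 0) (hP : P.natDegree ≤ 2 * n)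
    (horth : ∀ j : ℕ, 1 ≤ j → j ≤ 2 * n - 1 → polyMoment μ (-j) P = 0) :
    innR μ f f =
      P.coeff 0 * polyMoment μ (-(2 * n : ℕ)) P + P.coeff (2 * n) * polyMoment μ 0 P := by
  rw [hf.innR_eq hμ hf, polyMoment_mul hμ _ P P hP,
    Finset.sum_eq_add_of_mem 0 (2 * n) (by simp) (by simp) (by omega) fun i hi hi0 => ?_]
  · push_cast
    ring_nf
  · have := Finset.mem_range.1 hi
    rw [show -((n + n : ℕ) : ℤ) + i = -((2 * n - i : ℕ) : ℤ) by omega,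
      horth _ (by omega) (by omega), mul_zero]

end HasPolyRep

namespace OTP

variable (D : OTP) {n : ℕ}

instance : IsProbabilityMeasure D.μ := D.prob

theorem ae_norm_eq_one : ∀ᵐ τ ∂D.μ, ‖τ‖ = 1 := ae_iff.2 D.circ

theorem exists_sig_rep (hn : 1 ≤ n) :
    ∃ P : ℂ[X], HasPolyRep (fun z => (D.a n : ℂ) * D.sig n z) n P ∧ P.natDegree ≤ 2 * n ∧
      P.coeff 0 + P.coeff (2 * n) = 1 := by
  obtain ⟨c, d, e, h⟩ := D.sig_span n hn
  obtain ⟨P, hP, hdeg, h0, htop⟩ := exists_hasPolyRep_trig hn 1 e c d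
  refine ⟨P, fun z hz => (h z hz).trans (by simpa only [one_mul] using hP z hz), hdeg, ?_⟩
  rw [h0, htop]
  ring

theorem exists_pii_rep (hn : 1 ≤ n) :
    ∃ P : ℂ[X], HasPolyRep (fun z => (D.b n : ℂ) * D.pii n z) n P ∧ P.natDegree ≤ 2 * n ∧
      P.coeff 0 = I / 2 ∧ P.coeff (2 * n) = -I / 2 := by
  obtain ⟨c, d, h⟩ := D.pii_span n hn
  obtain ⟨P, hP, hdeg, h0, htop⟩ := exists_hasPolyRep_trig hn 0 1 c d
  refine ⟨P, fun z hz =>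
    (h z hz).trans (by simpa only [zero_mul, zero_add, one_mul] using hP z hz), hdeg, ?_, ?_⟩
  · rw [h0]; ring
  · rw [htop]; ring

end OTP

namespace OPUC

variable (D : OPUC)

theorem isOPUC (m : ℕ) : IsOPUC D.μ m (D.Φ m) where
  natDegree_eq := D.Φ_deg m
  monic := D.Φ_monic m
  polyMoment_eq_zero j hj := by
    rw [← D.Φ_orth m j hj]
    refine integral_congr_ae ?_
    filter_upwards [ae_conj_eq_inv_of_circle D.ae_norm_eq_one] with τ h
    rw [map_pow, h, inv_pow, zpow_neg, zpow_natCast]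

theorem one_sub_mul_conj_ne_zero (m : ℕ) :
    1 - (D.Φ (m + 1)).coeff 0 * conj ((D.Φ (m + 1)).coeff 0) ≠ 0 := by
  have hμ := D.ae_norm_eq_one
  have h := (D.isOPUC (m + 1)).polyMoment_self_ne_zero hμ D.nontriv
  rw [Nat.cast_add, Nat.cast_one, ← Nat.cast_succ,
    (D.isOPUC m).polyMoment_succ_self hμ (D.isOPUC (m + 1)) D.nontriv] at h
  exact right_ne_zero_of_mul h

variable {n m : ℕ} (hm : 2 * n = m + 1)
include hm

theorem exists_sig_eq :
    ∃ g t : ℂ, (∀ z ≠ 0, (D.a n : ℂ) * D.sig n z =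
        (z ^ n)⁻¹ * (g * revP (m + 1) (D.Φ (m + 1)) z + t * z * (D.Φ m).eval z)) ∧
      g * (2 + (D.Φ (m + 1)).coeff 0 + conj ((D.Φ (m + 1)).coeff 0)) =
        1 + (D.Φ (m + 1)).coeff 0 ∧
      t * (2 + (D.Φ (m + 1)).coeff 0 + conj ((D.Φ (m + 1)).coeff 0)) =
        1 - (D.Φ (m + 1)).coeff 0 * conj ((D.Φ (m + 1)).coeff 0) ∧
      (D.a n : ℂ) ^ 2 * (2 + (D.Φ (m + 1)).coeff 0 + conj ((D.Φ (m + 1)).coeff 0)) =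
        polyMoment D.μ (-m) (D.Φ m) *
          (1 - (D.Φ (m + 1)).coeff 0 * conj ((D.Φ (m + 1)).coeff 0)) := by
  have hn : 1 ≤ n := by omega
  have hμ := D.ae_norm_eq_one
  have hΦ := D.isOPUC m
  have hΦ' := D.isOPUC (m + 1)
  obtain ⟨P, hP, hdeg, hsum⟩ := D.exists_sig_rep hn
  have horth := hP.polyMoment_eq_zero_of_innR_eq_zero hμ (D.sig_orth n hn).1
  have hsin : polyMoment D.μ 0 P = polyMoment D.μ (-(2 * n : ℕ)) P := by
    have h := (D.sig_orth n hn).2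
    rw [hP.innR_sinL hμ, sub_self, ← two_mul, mul_eq_zero, sub_eq_zero] at h
    exact h.resolve_left (by simp [I_ne_zero])
  have hnorm := D.a_norm n hn
  rw [hP.innR_self hμ (by omega) hdeg horth] at hnorm
  rw [hm] at hdeg hsum hsin hnorm
  replace horth : ∀ j : ℕ, 1 ≤ j → j ≤ m → polyMoment D.μ (-j) P = 0 :=
    fun j hj hjm => horth j hj (by omega)
  have hJ0 := hΦ.polyMoment_zero_of_orth hμ hΦ' D.nontriv hdeg horth
  have hJ := hΦ.polyMoment_neg_succ_of_orth hμ hΦ' D.nontriv hdeg horth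
  have hM := hΦ.polyMoment_self_ne_zero hμ D.nontriv
  set c := (D.Φ (m + 1)).coeff 0
  set t := P.coeff (m + 1) - P.coeff 0 * conj c
  have key := mul_right_cancel₀ hM (hJ0.symm.trans (hsin.trans hJ))
  have hg : P.coeff 0 * (2 + c + conj c) = 1 + c := by
    linear_combination key + (1 + c) * hsum
  have ht : t * (2 + c + conj c) = 1 - c * conj c := by
    linear_combination (2 + c + conj c) * hsum - (1 + conj c) * hg
  refine ⟨P.coeff 0, t, fun z hz => ?_, hg, ht, ?_⟩
  · rw [show (D.a n : ℂ) * D.sig n z = z ^ (-(n : ℤ)) * P.eval z from hP z hz]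
    conv_lhs => rw [hΦ.eq_add_of_orth hμ hΦ' D.nontriv hdeg horth]
    simp only [eval_add, eval_mul, eval_C, eval_X, eval_conjReflect hΦ'.natDegree_eq.le hz,
      zpow_neg, zpow_natCast]
    ring
  · linear_combination (2 + c + conj c) * (hnorm + P.coeff (m + 1) * hsin +
      polyMoment D.μ (-(m + 1 : ℕ)) P * hsum + hJ) + polyMoment D.μ (-m) (D.Φ m) * ht

theorem b_sq_and_β :
    4 * (D.b n : ℂ) ^ 2 = polyMoment D.μ (-m) (D.Φ m) *
        (2 + (D.Φ (m + 1)).coeff 0 + conj ((D.Φ (m + 1)).coeff 0)) ∧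
      (D.β n : ℂ) * (2 + (D.Φ (m + 1)).coeff 0 + conj ((D.Φ (m + 1)).coeff 0)) =
        I * ((D.Φ (m + 1)).coeff 0 - conj ((D.Φ (m + 1)).coeff 0)) := by
  have hn : 1 ≤ n := by omega
  have hμ := D.ae_norm_eq_one
  have hΦ := D.isOPUC m
  have hΦ' := D.isOPUC (m + 1)
  obtain ⟨P, hP, hdeg, h0, htop⟩ := D.exists_pii_rep hn
  have horth := hP.polyMoment_eq_zero_of_innR_eq_zero hμ (D.pii_orth n hn)
  have hnorm := D.b_norm n hn
  rw [hP.innR_self hμ (by omega) hdeg horth] at hnorm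
  have hb : (D.b n : ℂ) ≠ 0 := Complex.ofReal_ne_zero.2 (D.hb n).ne'
  have hP' : HasPolyRep (fun z => (D.b n : ℂ)⁻¹ * D.pii n z) n (C ((D.b n : ℂ)⁻¹ ^ 2) * P) :=
    fun z hz => by
      rw [eval_mul, eval_C, mul_left_comm, ← show (D.b n : ℂ) * D.pii n z = _ from hP z hz]
      field_simp
  have hβ := D.β_def n hn
  rw [innR, funext fun τ => mul_comm (cosL n τ) _, ← innR, hP'.innR_cosL hμ, polyMoment_C_mul,
    polyMoment_C_mul, sub_self, ← two_mul] at hβ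
  rw [hm] at hdeg htop hnorm hβ
  replace horth : ∀ j : ℕ, 1 ≤ j → j ≤ m → polyMoment D.μ (-j) P = 0 :=
    fun j hj hjm => horth j hj (by omega)
  have hJ0 := hΦ.polyMoment_zero_of_orth hμ hΦ' D.nontriv hdeg horth
  have hJ := hΦ.polyMoment_neg_succ_of_orth hμ hΦ' D.nontriv hdeg horth
  have hM := hΦ.polyMoment_self_ne_zero hμ D.nontriv
  rw [h0, htop] at hJ0 hJ hnorm
  set c := (D.Φ (m + 1)).coeff 0
  set M := polyMoment D.μ (-m) (D.Φ m)
  have hb_sq : 4 * (D.b n : ℂ) ^ 2 = M * (2 + c + conj c) := by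
    linear_combination 4 * hnorm + 2 * I * hJ - 2 * I * hJ0 - (2 + c + conj c) * M * I_sq
  refine ⟨hb_sq, mul_right_cancel₀ hM ?_⟩
  field_simp at hβ
  linear_combination -(D.β n : ℂ) * hb_sq + 2 * hβ + 2 * hJ0 + 2 * hJ

theorem Lam_eq : Lam D.toOTP n = -2 * I / (polyMoment D.μ (-m) (D.Φ m) *
    (1 - (D.Φ (m + 1)).coeff 0 * conj ((D.Φ (m + 1)).coeff 0))) := by
  obtain ⟨-, -, -, -, -, ha⟩ := D.exists_sig_eq hm
  obtain ⟨hb, hβ⟩ := D.b_sq_and_β hm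
  have hM := (D.isOPUC m).polyMoment_self_ne_zero D.ae_norm_eq_one D.nontriv
  have hc := D.one_sub_mul_conj_ne_zero m
  set c := (D.Φ (m + 1)).coeff 0
  set M := polyMoment D.μ (-m) (D.Φ m)
  have hs : 2 + c + conj c ≠ 0 := fun h0 =>
    mul_ne_zero hM hc (by rw [← ha, h0, mul_zero])
  rw [Lam, eq_div_of_mul_eq hs ha, eq_div_of_mul_eq hs hβ,
    show (D.b n : ℂ) ^ 2 = M * (2 + c + conj c) / 4 by rw [← hb]; ring]
  field_simp
  linear_combination -(c - conj c) ^ 2 * I_sq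

end OPUC

/-- For `n ≥ 1` and `z ≠ 0`,
`a_n σ_n(z) = -(1/2) z^(-n) [Λ_n⁻¹ b_n^(-2) i z Φ_{2n-1}(z) - (1 - β_n i) Φ*_{2n}(z)]`. -/
theorem sigma_from_OPUC (D : OPUC) (n : ℕ) (hn : 1 ≤ n) (z : ℂ) (hz : z ≠ 0) :
    (D.a n : ℂ) * D.sig n z =
      -(1 / 2) * (z ^ n)⁻¹ *
        ((Lam D.toOTP n)⁻¹ * (((D.b n : ℂ)) ^ 2)⁻¹ * I * z * (D.Φ (2 * n - 1)).eval z
          - (1 - (D.β n : ℂ) * I) * revP (2 * n) (D.Φ (2 * n)) z) := by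
  obtain ⟨m, hm⟩ : ∃ m, 2 * n = m + 1 := ⟨2 * n - 1, by omega⟩
  rw [show 2 * n - 1 = m by omega, hm]
  obtain ⟨g, t, hrep, hg, ht, -⟩ := D.exists_sig_eq hm
  obtain ⟨hb, hβ⟩ := D.b_sq_and_β hm
  have hM := (D.isOPUC m).polyMoment_self_ne_zero D.ae_norm_eq_one D.nontriv
  have hc := D.one_sub_mul_conj_ne_zero m
  rw [D.Lam_eq hm]
  set c := (D.Φ (m + 1)).coeff 0
  have hs : 2 + c + conj c ≠ 0 := fun h0 => hc (by rw [← ht, h0, mul_zero])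
  have h2g : 2 * g = 1 - (D.β n : ℂ) * I :=
    mul_right_cancel₀ hs (by linear_combination 2 * hg + I * hβ + (c - conj c) * I_sq)
  have h2t : (-2 * I / (polyMoment D.μ (-m) (D.Φ m) * (1 - c * conj c)))⁻¹ *
      ((D.b n : ℂ) ^ 2)⁻¹ * I = -2 * t := by
    rw [show (D.b n : ℂ) ^ 2 = polyMoment D.μ (-m) (D.Φ m) * (2 + c + conj c) / 4 by
      rw [← hb]; ring]
    field_simp
    linear_combination 4 * ht
  rw [hrep z hz]
  linear_combination (z ^ n)⁻¹ * z * (D.Φ m).eval z / 2 * h2t +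
    (z ^ n)⁻¹ * revP (m + 1) (D.Φ (m + 1)) z / 2 * h2g
end
end
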